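/- Let A : [0,∞) → L(ℝ^m, ℝ^m) be continuous with ‖A(τ)‖ ≤ K·(q + ½vτ)^{-2-α} for constants K, q, v > 0 and α > 0. Then the operator Q on the Banach space (Ĉ, ‖·‖_λ) with λ = v/(2q), defined by (Qw)(t) = ∫_0^t ∫_0^s A(τ) w(τ) dτ ds, is bounded with operator norm ‖Q‖_λ ≤ 4(1 + 1/α)·K/(v² q^α). -/

import Mathlib

/-!
Write `λ = v / (2q)`. Since `q + vτ/2 = q(1 + λτ)` and `√(1 + x²) ≤ 1 + x` for `x ≥ 0`, the
integrand `A(τ)w(τ)` is bounded by `KBq^(-2-α)(1 + λτ)^(-1-α)`, whose integral over `[0, ∞)` is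
`KBq^(-2-α)/(λα)`. So the inner integral is bounded uniformly in `s`, the outer one grows at most
like `t ≤ √(1 + (λt)²)/λ`, and the resulting constant `4/α · K/(v²q^α)` is below the claimed one.
-/

open MeasureTheory

theorem Real.le_sqrt_one_add_sq (x : ℝ) : x ≤ √(1 + x ^ 2) :=
  (le_abs_self x).trans (Real.abs_le_sqrt (by linarith))

theorem Real.sqrt_one_add_sq_le_one_add {x : ℝ} (hx : 0 ≤ x) : √(1 + x ^ 2) ≤ 1 + x :=
  Real.sqrt_le_iff.2 ⟨by linarith, by nlinarith⟩

section Decay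

variable {lam α : ℝ}

theorem intervalIntegrable_one_add_mul_rpow (hlam : 0 ≤ lam) (r : ℝ) {s : ℝ} (hs : 0 ≤ s) :
    IntervalIntegrable (fun τ => (1 + lam * τ) ^ r) volume 0 s := by
  refine ContinuousOn.intervalIntegrable fun τ hτ => ?_
  rw [Set.uIcc_of_le hs] at hτ
  have : 0 < 1 + lam * τ := by nlinarith [hτ.1]
  exact (ContinuousAt.rpow_const (f := fun τ => 1 + lam * τ) (by fun_prop)
    (Or.inl this.ne')).continuousWithinAt

theorem integral_one_add_mul_rpow_neg_one_sub (hlam : 0 < lam) (hα : 0 < α) {s : ℝ}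
    (hs : 0 ≤ s) :
    ∫ τ in (0 : ℝ)..s, (1 + lam * τ) ^ (-1 - α) = (1 - (1 + lam * s) ^ (-α)) / (lam * α) := by
  have hzero : (0 : ℝ) ∉ Set.uIcc (1 + lam * 0) (1 + lam * s) := by
    rw [Set.uIcc_of_le (by nlinarith)]
    exact fun h => by linarith [h.1]
  rw [intervalIntegral.integral_comp_add_mul (fun x => x ^ (-1 - α)) hlam.ne' 1,
    integral_rpow (Or.inr ⟨by linarith, hzero⟩)]
  simp only [mul_zero, add_zero, Real.one_rpow, smul_eq_mul]
  rw [show -1 - α + 1 = -α by ring]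
  field_simp
  ring

theorem integral_one_add_mul_rpow_neg_one_sub_le (hlam : 0 < lam) (hα : 0 < α) {s : ℝ}
    (hs : 0 ≤ s) :
    ∫ τ in (0 : ℝ)..s, (1 + lam * τ) ^ (-1 - α) ≤ 1 / (lam * α) := by
  rw [integral_one_add_mul_rpow_neg_one_sub hlam hα hs]
  gcongr
  linarith [Real.rpow_nonneg (show 0 ≤ 1 + lam * s by nlinarith) (-α)]

variable {E : Type*} [NormedAddCommGroup E] [NormedSpace ℝ E] {f : ℝ → E} {c : ℝ}

theorem norm_integral_le_of_norm_le_decay (hlam : 0 < lam) (hα : 0 < α) (hc : 0 ≤ c)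
    (hf : ∀ τ ≥ 0, ‖f τ‖ ≤ c * (1 + lam * τ) ^ (-1 - α)) {s : ℝ} (hs : 0 ≤ s) :
    ‖∫ τ in (0 : ℝ)..s, f τ‖ ≤ c / (lam * α) :=
  calc ‖∫ τ in (0 : ℝ)..s, f τ‖
      ≤ ∫ τ in (0 : ℝ)..s, c * (1 + lam * τ) ^ (-1 - α) :=
        intervalIntegral.norm_integral_le_of_norm_le hs
          (Filter.Eventually.of_forall fun τ hτ => hf τ hτ.1.le)
          ((intervalIntegrable_one_add_mul_rpow hlam.le _ hs).const_mul c)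
    _ ≤ c * (1 / (lam * α)) := by
        rw [intervalIntegral.integral_const_mul]
        exact mul_le_mul_of_nonneg_left (integral_one_add_mul_rpow_neg_one_sub_le hlam hα hs) hc
    _ = c / (lam * α) := by ring

theorem norm_iterated_integral_le_of_norm_le_decay (hlam : 0 < lam) (hα : 0 < α) (hc : 0 ≤ c)
    (hf : ∀ τ ≥ 0, ‖f τ‖ ≤ c * (1 + lam * τ) ^ (-1 - α)) {t : ℝ} (ht : 0 ≤ t) :
    ‖∫ s in (0 : ℝ)..t, ∫ τ in (0 : ℝ)..s, f τ‖ ≤ c / (lam ^ 2 * α) * √(1 + (lam * t) ^ 2) :=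
  calc ‖∫ s in (0 : ℝ)..t, ∫ τ in (0 : ℝ)..s, f τ‖
      ≤ c / (lam * α) * |t - 0| :=
        intervalIntegral.norm_integral_le_of_norm_le_const fun s hs =>
          norm_integral_le_of_norm_le_decay hlam hα hc hf (Set.uIoc_of_le ht ▸ hs).1.le
    _ = c / (lam ^ 2 * α) * (lam * t) := by
        rw [sub_zero, abs_of_nonneg ht]
        field_simp
    _ ≤ c / (lam ^ 2 * α) * √(1 + (lam * t) ^ 2) := by
        gcongr
        exact Real.le_sqrt_one_add_sq _

end Decay

theorem Real.rpow_mul_sqrt_one_add_sq_le {x : ℝ} (hx : 0 ≤ x) (r : ℝ) :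
    (1 + x) ^ r * √(1 + x ^ 2) ≤ (1 + x) ^ (r + 1) := by
  rw [Real.rpow_add_one (by positivity)]
  gcongr
  exact Real.sqrt_one_add_sq_le_one_add hx

theorem norm_apply_le_of_decay {E F : Type*} [NormedAddCommGroup E] [NormedSpace ℝ E]
    [NormedAddCommGroup F] [NormedSpace ℝ F] (A : E →L[ℝ] F) (x : E) {K B q v α τ : ℝ}
    (hK : 0 ≤ K) (hB : 0 ≤ B) (hq : 0 < q) (hv : 0 ≤ v) (hτ : 0 ≤ τ)
    (hA : ‖A‖ ≤ K * (q + v / 2 * τ) ^ (-2 - α))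
    (hx : ‖x‖ ≤ B * √(1 + (v / (2 * q) * τ) ^ 2)) :
    ‖A x‖ ≤ K * B * q ^ (-2 - α) * (1 + v / (2 * q) * τ) ^ (-1 - α) := by
  have hfactor : q + v / 2 * τ = q * (1 + v / (2 * q) * τ) := by field_simp
  calc ‖A x‖ ≤ ‖A‖ * ‖x‖ := A.le_opNorm x
    _ ≤ K * (q + v / 2 * τ) ^ (-2 - α) * (B * √(1 + (v / (2 * q) * τ) ^ 2)) :=
        mul_le_mul hA hx (norm_nonneg x) (by positivity)
    _ = K * B * q ^ (-2 - α) *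
          ((1 + v / (2 * q) * τ) ^ (-2 - α) * √(1 + (v / (2 * q) * τ) ^ 2)) := by
        rw [hfactor, Real.mul_rpow hq.le (by positivity)]
        ring
    _ ≤ K * B * q ^ (-2 - α) * (1 + v / (2 * q) * τ) ^ (-2 - α + 1) := by
        gcongr
        exact Real.rpow_mul_sqrt_one_add_sq_le (by positivity) _
    _ = K * B * q ^ (-2 - α) * (1 + v / (2 * q) * τ) ^ (-1 - α) := by ring_nf

theorem double_integral_operator_norm_bound_general (m : ℕ)
    (A : ℝ → (EuclideanSpace ℝ (Fin m) →L[ℝ] EuclideanSpace ℝ (Fin m)))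
    (K q v α : ℝ) (hK : 0 < K) (hq : 0 < q) (hv : 0 < v) (hα : 0 < α)
    (hAbound : ∀ τ ≥ (0:ℝ), ‖A τ‖ ≤ K * (q + v / 2 * τ) ^ (-2 - α))
    (w : ℝ → EuclideanSpace ℝ (Fin m))
    (B : ℝ) (hB : 0 ≤ B)
    (hwB : ∀ t ≥ (0:ℝ), ‖w t‖ ≤ B * Real.sqrt (1 + (v / (2 * q) * t) ^ 2)) :
    ∀ t ≥ (0:ℝ),
      ‖∫ s in (0:ℝ)..t, ∫ τ in (0:ℝ)..s, A τ (w τ)‖ ≤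
        4 * (1 + 1 / α) * K / (v ^ 2 * q ^ α) * B
          * Real.sqrt (1 + (v / (2 * q) * t) ^ 2) := by
  intro t ht
  have hdecay : ∀ τ ≥ 0,
      ‖A τ (w τ)‖ ≤ K * B * q ^ (-2 - α) * (1 + v / (2 * q) * τ) ^ (-1 - α) := fun τ hτ =>
    norm_apply_le_of_decay (A τ) (w τ) hK.le hB hq hv.le hτ (hAbound τ hτ) (hwB τ hτ)
  have hconst : K * B * q ^ (-2 - α) / ((v / (2 * q)) ^ 2 * α)
      = 4 * (1 / α) * K / (v ^ 2 * q ^ α) * B := by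
    rw [show -2 - α = -(2 + α) by ring, Real.rpow_neg hq.le, Real.rpow_add hq, Real.rpow_two]
    field_simp
    ring
  calc ‖∫ s in (0:ℝ)..t, ∫ τ in (0:ℝ)..s, A τ (w τ)‖
      ≤ K * B * q ^ (-2 - α) / ((v / (2 * q)) ^ 2 * α) * √(1 + (v / (2 * q) * t) ^ 2) :=
        norm_iterated_integral_le_of_norm_le_decay (by positivity) hα (by positivity) hdecay ht
    _ ≤ 4 * (1 + 1 / α) * K / (v ^ 2 * q ^ α) * B * √(1 + (v / (2 * q) * t) ^ 2) := by
        rw [hconst]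
        gcongr
        linarith

/-- Operator norm bound for `(Qw)(t) = ∫_0^t ∫_0^s A(τ)w(τ) dτ ds` on the weighted
space with weight `⟨λt⟩`, `λ = v/(2q)`: if `‖A(τ)‖ ≤ K(q + ½vτ)^{-2-α}` then
`‖Q‖_λ ≤ 4(1 + 1/α)K/(v²q^α)`. -/
theorem double_integral_operator_norm_bound (m : ℕ)
    (A : ℝ → (EuclideanSpace ℝ (Fin m) →L[ℝ] EuclideanSpace ℝ (Fin m)))
    (hA : Continuous A)
    (K q v α : ℝ) (hK : 0 < K) (hq : 0 < q) (hv : 0 < v) (hα : 0 < α)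
    (hAbound : ∀ τ ≥ (0:ℝ), ‖A τ‖ ≤ K * (q + v / 2 * τ) ^ (-2 - α))
    (w : ℝ → EuclideanSpace ℝ (Fin m)) (hw : Continuous w)
    (B : ℝ) (hB : 0 ≤ B)
    (hwB : ∀ t ≥ (0:ℝ), ‖w t‖ ≤ B * Real.sqrt (1 + (v / (2 * q) * t) ^ 2)) :
    ∀ t ≥ (0:ℝ),
      ‖∫ s in (0:ℝ)..t, ∫ τ in (0:ℝ)..s, A τ (w τ)‖ ≤
        4 * (1 + 1 / α) * K / (v ^ 2 * q ^ α) * B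
          * Real.sqrt (1 + (v / (2 * q) * t) ^ 2) :=
  double_integral_operator_norm_bound_general m A K q v α hK hq hv hα hAbound w B hB hwB
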